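/- arXiv:1307.7087 — 3 statements merged into one kernel-verified Lean document; each statement's English description precedes it below -/
import Mathlib

section
/- If C ⊆ GF(2)^n is a t-grain-error-correcting code of maximum possible cardinality among all t-grain-error-correcting codes of length n, then |C| is even. -/
/-- `e` is a `t`-grain-error for `x`: weight at most `t`, `e₁ = 0`, and an error at
position `i` (2 ≤ i ≤ n) requires `x_i ≠ x_{i-1}`. (0-indexed here.) -/
def grainError {n : ℕ} (t : ℕ) (x e : Fin n → ZMod 2) : Prop :=
  (Finset.univ.filter fun i => e i ≠ 0).card ≤ t ∧
  (∀ i : Fin n, (i : ℕ) = 0 → e i = 0) ∧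
  (∀ i : Fin n, 0 < (i : ℕ) → e i ≠ 0 →
    x i ≠ x ⟨(i : ℕ) - 1, lt_of_le_of_lt (Nat.sub_le _ _) i.isLt⟩)

/-- The grain error-ball `B_{t,G}(x)`. -/
def grainBall {n : ℕ} (t : ℕ) (x : Fin n → ZMod 2) : Set (Fin n → ZMod 2) :=
  {y | ∃ e, grainError t x e ∧ y = x + e}

/-- The number of runs of a binary vector. -/
def runs {n : ℕ} (x : Fin n → ZMod 2) : ℕ :=
  (if n = 0 then 0 else 1) +
  (Finset.univ.filter fun i : Fin n =>
    0 < (i : ℕ) ∧ x i ≠ x ⟨(i : ℕ) - 1, lt_of_le_of_lt (Nat.sub_le _ _) i.isLt⟩).card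

/-- A code is `t`-grain-error-correcting if the grain error-balls of distinct
codewords are disjoint. -/
def grainCorrecting {n : ℕ} (t : ℕ) (C : Finset (Fin n → ZMod 2)) : Prop :=
  ∀ x ∈ C, ∀ y ∈ C, x ≠ y → Disjoint (grainBall t x) (grainBall t y)

lemma zmod2_add_one_ne : ∀ v : ZMod 2, v + 1 ≠ v := by decide

lemma zmod2_ne_zero : ∀ v : ZMod 2, v ≠ 0 → v = 1 := by decide

lemma add_one_one {n : ℕ} (x : Fin n → ZMod 2) : x + 1 + 1 = x := by
  funext i
  show x i + 1 + 1 = x i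
  have : (1 : ZMod 2) + 1 = 0 := by decide
  rw [add_assoc, this, add_zero]

lemma add_one_injective {n : ℕ} :
    Function.Injective (fun x : Fin n → ZMod 2 => x + 1) := by
  intro x y h
  have : x + 1 + 1 = y + 1 + 1 := by simp only at h; rw [h]
  rwa [add_one_one, add_one_one] at this

lemma grainBall_coord0 {n t : ℕ} (hn : 0 < n) (x y : Fin n → ZMod 2)
    (h : y ∈ grainBall t x) : y ⟨0, hn⟩ = x ⟨0, hn⟩ := by
  obtain ⟨e, ⟨_, h0, _⟩, rfl⟩ := h
  have he := h0 ⟨0, hn⟩ rfl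
  simp [he]

lemma grainError_add_one {n t : ℕ} (x e : Fin n → ZMod 2) (h : grainError t x e) :
    grainError t (x + 1) e := by
  obtain ⟨h1, h2, h3⟩ := h
  refine ⟨h1, h2, fun i hi hei => ?_⟩
  have := h3 i hi hei
  simpa using this

lemma mem_ball_add_one {n t : ℕ} (x y : Fin n → ZMod 2)
    (h : y ∈ grainBall t x) : y + 1 ∈ grainBall t (x + 1) := by
  obtain ⟨e, he, rfl⟩ := h
  exact ⟨e, grainError_add_one x e he, by rw [add_right_comm]⟩

lemma aux_correcting {n : ℕ} (hn : 0 < n) (t : ℕ) (E : Finset (Fin n → ZMod 2))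
    (hE : grainCorrecting t E) (v : ZMod 2) (hv : ∀ x ∈ E, x ⟨0, hn⟩ = v) :
    grainCorrecting t (E ∪ E.image (· + 1)) := by
  have disj_cross : ∀ a ∈ E, ∀ b ∈ E, Disjoint (grainBall t a) (grainBall t (b + 1)) := by
    intro a ha b hb
    rw [Set.disjoint_left]
    intro z hz1 hz2
    have h1 := grainBall_coord0 hn a z hz1
    have h2 := grainBall_coord0 hn (b + 1) z hz2
    rw [hv a ha] at h1
    have hb1 : (b + 1) ⟨0, hn⟩ = v + 1 := by
      show b ⟨0, hn⟩ + 1 = v + 1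
      rw [hv b hb]
    rw [hb1] at h2
    rw [h1] at h2
    exact zmod2_add_one_ne v h2.symm
  intro x hx y hy hxy
  rw [Finset.mem_union, Finset.mem_image] at hx hy
  rcases hx with hx | ⟨a, ha, rfl⟩ <;> rcases hy with hy | ⟨b, hb, rfl⟩
  · exact hE x hx y hy hxy
  · exact disj_cross x hx b hb
  · exact (disj_cross y hy a ha).symm
  · have hab : a ≠ b := fun h => hxy (by rw [h])
    rw [Set.disjoint_left]
    intro z hz1 hz2
    have h1 := mem_ball_add_one (a + 1) z hz1
    have h2 := mem_ball_add_one (b + 1) z hz2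
    rw [add_one_one] at h1
    rw [add_one_one] at h2
    exact Set.disjoint_left.mp (hE a ha b hb hab) h1 h2

lemma aux_card {n : ℕ} (hn : 0 < n) (E : Finset (Fin n → ZMod 2))
    (v : ZMod 2) (hv : ∀ x ∈ E, x ⟨0, hn⟩ = v) :
    (E ∪ E.image (· + 1)).card = 2 * E.card := by
  have hdisj : Disjoint E (E.image (· + 1)) := by
    rw [Finset.disjoint_left]
    intro x hx hx'
    rw [Finset.mem_image] at hx'
    obtain ⟨a, ha, rfl⟩ := hx'
    have h1 : (a + 1) ⟨0, hn⟩ = v := hv _ hx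
    have h2 : a ⟨0, hn⟩ = v := hv a ha
    have : v + 1 = v := by
      rw [← h2] at h1 ⊢
      exact h1
    exact zmod2_add_one_ne v this
  rw [Finset.card_union_of_disjoint hdisj,
    Finset.card_image_of_injective _ add_one_injective]
  omega

/-- A maximum-cardinality `t`-grain-error-correcting code has an even number of
codewords. -/
theorem stmt3 {n t : ℕ} (hn : 0 < n) (C : Finset (Fin n → ZMod 2))
    (hC : grainCorrecting t C)
    (hmax : ∀ D : Finset (Fin n → ZMod 2), grainCorrecting t D → D.card ≤ C.card) :
    Even C.card := by
  classical
  set C0 := C.filter (fun x => x ⟨0, hn⟩ = 0) with hC0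
  set C1 := C.filter (fun x => ¬ x ⟨0, hn⟩ = 0) with hC1
  have hsum : C0.card + C1.card = C.card :=
    Finset.card_filter_add_card_filter_not _
  have hsub0 : grainCorrecting t C0 := fun x hx y hy =>
    hC x (Finset.mem_filter.mp hx).1 y (Finset.mem_filter.mp hy).1
  have hsub1 : grainCorrecting t C1 := fun x hx y hy =>
    hC x (Finset.mem_filter.mp hx).1 y (Finset.mem_filter.mp hy).1
  have hv0 : ∀ x ∈ C0, x ⟨0, hn⟩ = (0 : ZMod 2) := fun x hx =>
    (Finset.mem_filter.mp hx).2
  have hv1 : ∀ x ∈ C1, x ⟨0, hn⟩ = (1 : ZMod 2) := fun x hx =>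
    zmod2_ne_zero _ (Finset.mem_filter.mp hx).2
  have h0 : 2 * C0.card ≤ C.card := by
    have := hmax _ (aux_correcting hn t C0 hsub0 0 hv0)
    rwa [aux_card hn C0 0 hv0] at this
  have h1 : 2 * C1.card ≤ C.card := by
    have := hmax _ (aux_correcting hn t C1 hsub1 1 hv1)
    rwa [aux_card hn C1 1 hv1] at this
  exact ⟨C0.card, by omega⟩
end

section
/- For all integers n, t with 0 < t < n, the maximum size M(n,t) of a t-grain-error-correcting code of length n satisfies M(n,t) ≤ 2 · Σ_{k=0}^{n-1} binomial(n-1, k) / (Σ_{j=0}^{min(t,k)} binomial(k, j)). -/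
open Finset

lemma ZMod.two_add_one_eq_of_ne {a b : ZMod 2} (h : a ≠ b) : a + 1 = b := by
  revert a b; decide

lemma ZMod.two_eq_of_ne_iff_ne {a b c : ZMod 2} (h : a ≠ c ↔ b ≠ c) : a = b := by
  revert a b c; decide

lemma card_le_sum_of_pairwiseDisjoint {ι β R : Type*} [Fintype β] [Semiring R] [PartialOrder R]
    [IsOrderedRing R] {C : Finset ι} {B : ι → Finset β} (hB : (C : Set ι).PairwiseDisjoint B)
    {w : β → R} (hw : ∀ y, 0 ≤ w y) (h : ∀ x ∈ C, 1 ≤ ∑ y ∈ B x, w y) :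
    (#C : R) ≤ ∑ y, w y := by
  classical
  calc (#C : R) = ∑ _x ∈ C, 1 := by simp
    _ ≤ ∑ x ∈ C, ∑ y ∈ B x, w y := sum_le_sum h
    _ = ∑ y ∈ C.biUnion B, w y := (sum_biUnion hB).symm
    _ ≤ ∑ y, w y := sum_le_univ_sum_of_nonneg hw

def hammingBallVolume (t k : ℕ) : ℕ := ∑ j ∈ range (t + 1), k.choose j

lemma one_le_hammingBallVolume (t k : ℕ) : 1 ≤ hammingBallVolume t k :=
  (Nat.choose_zero_right k).symm.le.trans <|
    single_le_sum (f := fun j => k.choose j) (fun _ _ => Nat.zero_le _) (mem_range.mpr t.succ_pos)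

lemma hammingBallVolume_mono (t : ℕ) : Monotone (hammingBallVolume t) := fun _ _ h =>
  sum_le_sum fun j _ => Nat.choose_le_choose j h

lemma hammingBallVolume_eq_sum_range_min (t k : ℕ) :
    hammingBallVolume t k = ∑ j ∈ range (min t k + 1), k.choose j := by
  refine (sum_subset (range_subset_range.mpr (by omega)) fun j hj hjk => ?_).symm
  rw [mem_range] at hj hjk
  exact Nat.choose_eq_zero_of_lt (by omega)

section Indicator

variable {α : Type*} [DecidableEq α]

def indicatorVec (E : Finset α) : α → ZMod 2 := fun i => if i ∈ E then 1 else 0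

lemma indicatorVec_ne_zero {E : Finset α} {i : α} : indicatorVec E i ≠ 0 ↔ i ∈ E := by
  by_cases h : i ∈ E <;> simp [indicatorVec, h]

lemma indicatorVec_injective : Function.Injective (indicatorVec (α := α)) := fun E E' h => by
  ext i
  rw [← indicatorVec_ne_zero, h, indicatorVec_ne_zero]

lemma indicatorVec_filter_ne_zero [Fintype α] (e : α → ZMod 2) :
    indicatorVec {i | e i ≠ 0} = e := by
  funext i
  by_cases h : e i = 0
  · simp [indicatorVec, h]
  · simpa [indicatorVec, h] using ZMod.two_add_one_eq_of_ne (Ne.symm h)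

end Indicator

variable {m : ℕ}

def transitions (x : Fin (m + 1) → ZMod 2) : Finset (Fin (m + 1)) :=
  (univ.filter fun i : Fin m => x i.succ ≠ x i.castSucc).map (Fin.succEmb m)

lemma succ_mem_transitions {x : Fin (m + 1) → ZMod 2} {i : Fin m} :
    i.succ ∈ transitions x ↔ x i.succ ≠ x i.castSucc := by
  simp [transitions]

lemma zero_notMem_transitions (x : Fin (m + 1) → ZMod 2) : 0 ∉ transitions x := by
  simp [transitions]

lemma transitions_subset (x : Fin (m + 1) → ZMod 2) :
    transitions x ⊆ univ.map (Fin.succEmb m) :=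
  map_subset_map.mpr (subset_univ _)

lemma card_transitions_le (x : Fin (m + 1) → ZMod 2) : #(transitions x) ≤ m := by
  simpa using card_le_card (transitions_subset x)

lemma grainError_iff {t : ℕ} {x e : Fin (m + 1) → ZMod 2} :
    grainError t x e ↔ (∀ i, e i ≠ 0 → i ∈ transitions x) ∧ #{i | e i ≠ 0} ≤ t := by
  have hpred (i : Fin m) :
      (⟨(i.succ : ℕ) - 1, lt_of_le_of_lt (Nat.sub_le _ _) i.succ.isLt⟩ : Fin (m + 1)) =
        i.castSucc := Fin.ext (by simp)
  constructor
  · rintro ⟨hweight, hzero, hsucc⟩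
    refine ⟨fun i => Fin.cases (fun h0 => absurd (hzero 0 rfl) h0) (fun i hi => ?_) i, hweight⟩
    rw [succ_mem_transitions, ← hpred]
    exact hsucc i.succ (Nat.succ_pos _) hi
  · rintro ⟨hsupp, hweight⟩
    refine ⟨hweight, fun i hi => ?_, fun i hi hei => ?_⟩
    · obtain rfl : i = 0 := Fin.ext hi
      by_contra h
      exact zero_notMem_transitions x (hsupp 0 h)
    · obtain ⟨j, rfl⟩ := Fin.exists_succ_eq.mpr (Fin.pos_iff_ne_zero.mp hi)
      rw [hpred]
      exact succ_mem_transitions.mp (hsupp _ hei)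

lemma transitions_add_indicatorVec_subset {x : Fin (m + 1) → ZMod 2} {E : Finset (Fin (m + 1))}
    (hE : E ⊆ transitions x) :
    transitions (x + indicatorVec E) ⊆
      (transitions x \ E) ∪ (E.preimage Fin.castSucc (Fin.castSucc_injective m).injOn).map
        (Fin.succEmb m) := by
  intro i hi
  obtain ⟨j, rfl⟩ := Fin.exists_succ_eq.mpr (ne_of_mem_of_not_mem hi (zero_notMem_transitions _))
  rw [mem_union, mem_sdiff, ← Fin.coe_succEmb, mem_map' (Fin.succEmb m), mem_preimage,
    Fin.coe_succEmb]
  by_cases hprev : j.castSucc ∈ E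
  · exact .inr hprev
  left
  rw [succ_mem_transitions] at hi ⊢
  simp only [Pi.add_apply, indicatorVec, hprev, if_false, add_zero] at hi
  -- flipping a transition of `x` at `j.succ` while keeping `j` removes it
  by_cases hcur : j.succ ∈ E
  · rw [if_pos hcur, ZMod.two_add_one_eq_of_ne (succ_mem_transitions.mp (hE hcur))] at hi
    exact absurd rfl hi
  · rw [if_neg hcur, add_zero] at hi
    exact ⟨hi, hcur⟩

lemma card_transitions_add_indicatorVec_le {x : Fin (m + 1) → ZMod 2} {E : Finset (Fin (m + 1))}
    (hE : E ⊆ transitions x) :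
    #(transitions (x + indicatorVec E)) ≤ #(transitions x) :=
  calc #(transitions (x + indicatorVec E))
      ≤ #(transitions x \ E) + #(E.preimage Fin.castSucc (Fin.castSucc_injective m).injOn) :=
        (card_le_card (transitions_add_indicatorVec_subset hE)).trans
          ((card_union_le _ _).trans_eq (by rw [card_map]))
    _ ≤ (#(transitions x) - #E) + #E := by
        gcongr
        · exact (card_sdiff_of_subset hE).le
        · exact card_le_card_of_injOn Fin.castSucc (fun a ha => mem_preimage.mp ha)
            (Fin.castSucc_injective m).injOn
    _ = #(transitions x) := Nat.sub_add_cancel (card_le_card hE)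

lemma card_filter_powerset_card_le {α : Type*} (s : Finset α) (t : ℕ) :
    #{E ∈ s.powerset | #E ≤ t} = ∑ j ∈ range (t + 1), (#s).choose j := by
  rw [card_eq_sum_card_fiberwise (f := card) (t := range (t + 1))
    (fun E hE => mem_range.mpr (Nat.lt_succ_of_le (mem_filter.mp hE).2))]
  refine sum_congr rfl fun j hj => ?_
  rw [← card_powersetCard, powersetCard_eq_filter, filter_filter]
  congr 1
  exact filter_congr fun E _ =>
    ⟨fun h => h.2, by rintro rfl; exact ⟨Nat.lt_succ_iff.mp (mem_range.mp hj), rfl⟩⟩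

def grainBallFinset (t : ℕ) (x : Fin (m + 1) → ZMod 2) : Finset (Fin (m + 1) → ZMod 2) :=
  {E ∈ (transitions x).powerset | #E ≤ t}.image fun E => x + indicatorVec E

lemma coe_grainBallFinset (t : ℕ) (x : Fin (m + 1) → ZMod 2) :
    (grainBallFinset t x : Set (Fin (m + 1) → ZMod 2)) = grainBall t x := by
  ext y
  simp only [grainBallFinset, grainBall, grainError_iff, coe_image, coe_filter, mem_powerset,
    Set.mem_image, Set.mem_ofPred_eq]
  constructor
  · rintro ⟨E, ⟨hE, hcard⟩, rfl⟩
    refine ⟨indicatorVec E, ⟨fun i hi => hE (indicatorVec_ne_zero.mp hi), ?_⟩, rfl⟩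
    simpa only [indicatorVec_ne_zero, filter_mem_eq_inter, univ_inter] using hcard
  · rintro ⟨e, ⟨hsupp, hweight⟩, rfl⟩
    exact ⟨({i | e i ≠ 0} : Finset _), ⟨fun i hi => hsupp i (mem_filter.mp hi).2, hweight⟩,
      by rw [indicatorVec_filter_ne_zero]⟩

lemma card_grainBallFinset (t : ℕ) (x : Fin (m + 1) → ZMod 2) :
    #(grainBallFinset t x) = hammingBallVolume t #(transitions x) := by
  rw [grainBallFinset, card_image_of_injective _
    fun E E' h => indicatorVec_injective (add_left_cancel h), card_filter_powerset_card_le,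
    hammingBallVolume]

lemma card_transitions_le_of_mem_grainBallFinset {t : ℕ} {x y : Fin (m + 1) → ZMod 2}
    (hy : y ∈ grainBallFinset t x) : #(transitions y) ≤ #(transitions x) := by
  obtain ⟨E, hE, rfl⟩ := mem_image.mp hy
  exact card_transitions_add_indicatorVec_le (mem_powerset.mp (mem_filter.mp hE).1)

lemma eq_of_apply_zero_eq_of_transitions_eq {x y : Fin (m + 1) → ZMod 2} (h0 : x 0 = y 0)
    (hT : transitions x = transitions y) : x = y := by
  funext i
  induction i using Fin.induction with
  | zero => exact h0
  | succ i ih =>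
    have h := congrArg (i.succ ∈ ·) hT
    simp only [eq_iff_iff, succ_mem_transitions, ih] at h
    exact ZMod.two_eq_of_ne_iff_ne h

lemma card_filter_card_transitions_eq_le (k : ℕ) :
    #{y : Fin (m + 1) → ZMod 2 | #(transitions y) = k} ≤ 2 * m.choose k := by
  calc #{y : Fin (m + 1) → ZMod 2 | #(transitions y) = k}
      ≤ #((univ : Finset (ZMod 2)) ×ˢ (univ.map (Fin.succEmb m)).powersetCard k) := by
        refine card_le_card_of_injOn (fun y => (y 0, transitions y)) (fun y hy => ?_) ?_
        · exact mem_product.mpr ⟨mem_univ _,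
            mem_powersetCard.mpr ⟨transitions_subset y, (mem_filter.mp hy).2⟩⟩
        · intro x _ y _ hxy
          exact eq_of_apply_zero_eq_of_transitions_eq (Prod.ext_iff.mp hxy).1
            (Prod.ext_iff.mp hxy).2
    _ = 2 * m.choose k := by simp

lemma one_le_sum_inv_hammingBallVolume (t : ℕ) (x : Fin (m + 1) → ZMod 2) :
    1 ≤ ∑ y ∈ grainBallFinset t x, (hammingBallVolume t #(transitions y) : ℚ)⁻¹ := by
  have hpos (y : Fin (m + 1) → ZMod 2) : (0 : ℚ) < hammingBallVolume t #(transitions y) :=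
    Nat.cast_pos.mpr (one_le_hammingBallVolume t _)
  calc (1 : ℚ)
      = ∑ _y ∈ grainBallFinset t x, (hammingBallVolume t #(transitions x) : ℚ)⁻¹ := by
        rw [sum_const, card_grainBallFinset, nsmul_eq_mul]
        exact (mul_inv_cancel₀ (hpos x).ne').symm
    _ ≤ _ := sum_le_sum fun y hy => inv_anti₀ (hpos y) <| Nat.cast_le.mpr <|
        hammingBallVolume_mono t (card_transitions_le_of_mem_grainBallFinset hy)

lemma sum_comp_card_transitions_le {R : Type*} [CommSemiring R] [PartialOrder R] [IsOrderedRing R]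
    (f : ℕ → R) (hf : ∀ k, 0 ≤ f k) :
    ∑ y : Fin (m + 1) → ZMod 2, f #(transitions y) ≤
      2 * ∑ k ∈ range (m + 1), (m.choose k : R) * f k := by
  calc ∑ y : Fin (m + 1) → ZMod 2, f #(transitions y)
      = ∑ k ∈ range (m + 1), ∑ y ∈ {y | #(transitions y) = k}, f #(transitions y) :=
        (sum_fiberwise_of_maps_to
          (fun y _ => mem_range.mpr (Nat.lt_succ_of_le (card_transitions_le y))) _).symm
    _ = ∑ k ∈ range (m + 1), (#{y | #(transitions y) = k} : R) * f k := by
        refine sum_congr rfl fun k _ => ?_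
        rw [sum_congr rfl fun y hy => by rw [(mem_filter.mp hy).2], sum_const, nsmul_eq_mul]
    _ ≤ ∑ k ∈ range (m + 1), 2 * (m.choose k : R) * f k := by
        gcongr with k
        · exact hf k
        · have := Nat.mono_cast (α := R) (card_filter_card_transitions_eq_le (m := m) k)
          push_cast at this
          exact this
    _ = 2 * ∑ k ∈ range (m + 1), (m.choose k : R) * f k := by
        simp only [mul_sum, mul_assoc]

theorem stmt6_general {n t : ℕ} (htn : t < n)
    (C : Finset (Fin n → ZMod 2)) (hC : grainCorrecting t C) :
    (C.card : ℚ) ≤ 2 * ∑ k ∈ Finset.range n,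
      ((n - 1).choose k : ℚ) / ∑ j ∈ Finset.range (min t k + 1), (k.choose j : ℚ) := by
  obtain ⟨m, rfl⟩ : ∃ m, n = m + 1 := Nat.exists_eq_add_one.mpr (by omega)
  have hdisj : (C : Set (Fin (m + 1) → ZMod 2)).PairwiseDisjoint (grainBallFinset t) :=
    fun x hx y hy hxy => by
      simpa only [← disjoint_coe, coe_grainBallFinset] using hC x hx y hy hxy
  calc (#C : ℚ)
      ≤ ∑ y : Fin (m + 1) → ZMod 2, (hammingBallVolume t #(transitions y) : ℚ)⁻¹ :=
        card_le_sum_of_pairwiseDisjoint hdisj (fun _ => by positivity)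
          fun x _ => one_le_sum_inv_hammingBallVolume t x
    _ ≤ 2 * ∑ k ∈ range (m + 1), (m.choose k : ℚ) * (hammingBallVolume t k : ℚ)⁻¹ :=
        sum_comp_card_transitions_le (fun k => (hammingBallVolume t k : ℚ)⁻¹)
          fun _ => by positivity
    _ = _ := by
        simp only [hammingBallVolume_eq_sum_range_min, Nat.cast_sum, div_eq_mul_inv,
          Nat.add_sub_cancel]

/-- For `0 < t < n`, every `t`-grain-error-correcting code `C` of length `n` satisfies
`|C| ≤ 2 ∑_{k=0}^{n-1} C(n-1,k) / ∑_{j=0}^{min(t,k)} C(k,j)`. -/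
theorem stmt6 {n t : ℕ} (ht : 0 < t) (htn : t < n)
    (C : Finset (Fin n → ZMod 2)) (hC : grainCorrecting t C) :
    (C.card : ℚ) ≤ 2 * ∑ k ∈ Finset.range n,
      ((n - 1).choose k : ℚ) / ∑ j ∈ Finset.range (min t k + 1), (k.choose j : ℚ) :=
  stmt6_general htn C hC
end

section
/- Let A be an additive abelian group of order n, and let (g_1, …, g_n) be an ordering of the elements of A with g_1 = 0 and such that for each i > 1, g_i and −g_i occupy adjacent positions in the sequence (whenever −g_i ≠ g_i). Then for every a ∈ A, the code C = { x ∈ GF(2)^n : Σ_{k=1}^{n} x_k · g_k = a } is a single-grain-error-correcting code. -/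
lemma zmod2_cases (a : ZMod 2) : a = 0 ∨ a = 1 := by revert a; decide

lemma zmod2_ne_zero_s14 {a : ZMod 2} (h : a ≠ 0) : a = 1 := by revert h; revert a; decide

lemma v0 : (0 : ZMod 2).val = 0 := rfl
lemma v1 : (1 : ZMod 2).val = 1 := rfl

/-- weight-≤1 structure lemma -/
lemma wt_le_one {n : ℕ} {e : Fin n → ZMod 2}
    (h : (Finset.univ.filter fun i => e i ≠ 0).card ≤ 1) :
    (∀ k, e k = 0) ∨ ∃ i, e i = 1 ∧ ∀ k, k ≠ i → e k = 0 := by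
  by_cases hz : ∀ k, e k = 0
  · exact Or.inl hz
  · push_neg at hz
    obtain ⟨i, hi⟩ := hz
    refine Or.inr ⟨i, zmod2_ne_zero_s14 hi, ?_⟩
    intro k hk
    by_contra hek
    have hsub : ({i, k} : Finset (Fin n)) ⊆ Finset.univ.filter fun j => e j ≠ 0 := by
      intro m hm
      rcases Finset.mem_insert.mp hm with rfl | hm
      · simp [hi]
      · rcases Finset.mem_singleton.mp hm with rfl
        simp [hek]
    have h2 := Finset.card_le_card hsub
    rw [Finset.card_insert_of_notMem (by simp [hk.symm]), Finset.card_singleton] at h2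
    omega

lemma single_diff {n : ℕ} {A : Type*} [AddCommGroup A] (g : Fin n → A)
    {x y : Fin n → ZMod 2} (j : Fin n)
    (hsum : ∑ k, (x k).val • g k = ∑ k, (y k).val • g k)
    (hk : ∀ k, k ≠ j → x k = y k) :
    (x j).val • g j = (y j).val • g j := by
  have h1 := Finset.add_sum_erase Finset.univ (fun k => (x k).val • g k) (Finset.mem_univ j)
  have h2 := Finset.add_sum_erase Finset.univ (fun k => (y k).val • g k) (Finset.mem_univ j)
  have hs : ∑ k ∈ Finset.univ.erase j, (x k).val • g k
      = ∑ k ∈ Finset.univ.erase j, (y k).val • g k :=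
    Finset.sum_congr rfl fun k hkm => by rw [hk k (Finset.mem_erase.mp hkm).1]
  have := h1.trans (hsum.trans h2.symm)
  rw [hs] at this
  exact add_right_cancel this

lemma double_diff {n : ℕ} {A : Type*} [AddCommGroup A] (g : Fin n → A)
    {x y : Fin n → ZMod 2} (i j : Fin n) (hij : i ≠ j)
    (hsum : ∑ k, (x k).val • g k = ∑ k, (y k).val • g k)
    (hk : ∀ k, k ≠ i → k ≠ j → x k = y k) :
    (x i).val • g i + (x j).val • g j = (y i).val • g i + (y j).val • g j := by
  have hji : j ∈ Finset.univ.erase i := Finset.mem_erase.mpr ⟨hij.symm, Finset.mem_univ j⟩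
  have h1x := Finset.add_sum_erase (Finset.univ.erase i) (fun k => (x k).val • g k) hji
  have h2x := Finset.add_sum_erase Finset.univ (fun k => (x k).val • g k) (Finset.mem_univ i)
  have h1y := Finset.add_sum_erase (Finset.univ.erase i) (fun k => (y k).val • g k) hji
  have h2y := Finset.add_sum_erase Finset.univ (fun k => (y k).val • g k) (Finset.mem_univ i)
  have hs : ∑ k ∈ (Finset.univ.erase i).erase j, (x k).val • g k
      = ∑ k ∈ (Finset.univ.erase i).erase j, (y k).val • g k :=
    Finset.sum_congr rfl fun k hkm => by
      have h' := Finset.mem_erase.mp hkm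
      exact congrArg (fun z => (z : ZMod 2).val • g k)
        (hk k (Finset.mem_erase.mp h'.2).1 h'.1)
  rw [← h1x] at h2x
  rw [← h1y] at h2y
  have := h2x.trans (hsum.trans h2y.symm)
  rw [hs, ← add_assoc, ← add_assoc] at this
  exact add_right_cancel this

lemma neg_case {n : ℕ} {A : Type*} [AddCommGroup A] {g : Fin n → A}
    (hbij : Function.Bijective g)
    (hadj : ∀ i : Fin n, 0 < (i : ℕ) → -(g i) ≠ g i →
      ∃ j : Fin n, g j = -(g i) ∧ ((j : ℕ) = (i : ℕ) + 1 ∨ (i : ℕ) = (j : ℕ) + 1))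
    {x y : Fin n → ZMod 2} {i j : Fin n} (hij : i ≠ j)
    (hipos : 0 < (i : ℕ)) (hgj : g j = -(g i))
    (hxeq : x i = x j) (hyeq : y i = y j)
    (hegi : x i ≠ x ⟨(i : ℕ) - 1, lt_of_le_of_lt (Nat.sub_le _ _) i.isLt⟩)
    (hfgj : y j ≠ y ⟨(j : ℕ) - 1, lt_of_le_of_lt (Nat.sub_le _ _) j.isLt⟩) : False := by
  have hne : -(g i) ≠ g i := fun h => hij (hbij.1 (hgj.trans h)).symm
  obtain ⟨j', hj'g, hj'adj⟩ := hadj i hipos hne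
  have hjj : j = j' := (hbij.1 (hj'g.trans hgj.symm)).symm
  subst hjj
  rcases hj'adj with hcase | hcase
  · have hidx : (⟨(j : ℕ) - 1, lt_of_le_of_lt (Nat.sub_le _ _) j.isLt⟩ : Fin n) = i :=
      Fin.ext (show (j : ℕ) - 1 = (i : ℕ) by omega)
    rw [hidx] at hfgj
    exact hfgj hyeq.symm
  · have hidx : (⟨(i : ℕ) - 1, lt_of_le_of_lt (Nat.sub_le _ _) i.isLt⟩ : Fin n) = j :=
      Fin.ext (show (i : ℕ) - 1 = (j : ℕ) by omega)
    rw [hidx] at hegi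
    exact hegi hxeq

/-- Construction 1: if the elements of an abelian group `A` of order `n` are ordered
as `g_1 = 0, g_2, …, g_n` in such a way that each `g_i` (i > 1) is adjacent to `-g_i`
whenever `-g_i ≠ g_i`, then for each `a ∈ A` the code
`{x ∈ GF(2)^n : ∑ x_k g_k = a}` corrects a single grain-error. -/
theorem stmt14 {n : ℕ} {A : Type*} [AddCommGroup A] [Fintype A] [DecidableEq A]
    (hcard : Fintype.card A = n) (g : Fin n → A) (hbij : Function.Bijective g)
    (hg0 : ∀ h : 0 < n, g ⟨0, h⟩ = 0)
    (hadj : ∀ i : Fin n, 0 < (i : ℕ) → -(g i) ≠ g i →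
      ∃ j : Fin n, g j = -(g i) ∧ ((j : ℕ) = (i : ℕ) + 1 ∨ (i : ℕ) = (j : ℕ) + 1))
    (a : A) :
    grainCorrecting 1 (Finset.univ.filter fun x : Fin n → ZMod 2 =>
      ∑ k, (x k).val • g k = a) := by
  intro x hx y hy hxy
  simp only [Finset.mem_filter, Finset.mem_univ, true_and] at hx hy
  rw [Set.disjoint_left]
  rintro z ⟨e, ⟨hec, he0, heg⟩, rfl⟩ ⟨f, ⟨hfc, hf0, hfg⟩, hz⟩
  have hpt : ∀ k, x k + e k = y k + f k := fun k => congrFun hz k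
  have hsum : ∑ k, (x k).val • g k = ∑ k, (y k).val • g k := hx.trans hy.symm
  rcases wt_le_one hec with he | ⟨i, hi1, hi0⟩ <;> rcases wt_le_one hfc with hf | ⟨j, hj1, hj0⟩
  -- Case 1: e = 0 and f = 0
  · exact hxy (funext fun k => by
      have h := hpt k; rwa [he k, hf k, add_zero, add_zero] at h)
  -- Case 2: e = 0, f = δ_j
  · have hjpos : 0 < (j : ℕ) := Nat.pos_of_ne_zero fun h0 => by simp [hf0 j h0] at hj1
    have hkk : ∀ k, k ≠ j → x k = y k := fun k hk => by
      have h := hpt k; rwa [he k, hj0 k hk, add_zero, add_zero] at h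
    have hxyj : x j = y j + 1 := by
      have h := hpt j; rwa [he j, add_zero, hj1] at h
    have key := single_diff g j hsum hkk
    have hgj : g j = 0 := by
      rcases zmod2_cases (x j) with h | h <;> rcases zmod2_cases (y j) with h' | h' <;>
        rw [h, h'] at hxyj key <;>
        first
          | exact absurd hxyj (by decide)
          | simpa [v0, v1, zero_nsmul, one_nsmul] using key
          | simpa [v0, v1, zero_nsmul, one_nsmul] using key.symm
    have hn : 0 < n := lt_of_le_of_lt (Nat.zero_le _) j.isLt
    have hj0' := hbij.1 (hgj.trans (hg0 hn).symm)
    rw [hj0'] at hjpos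
    simp at hjpos
  -- Case 3: e = δ_i, f = 0
  · have hipos : 0 < (i : ℕ) := Nat.pos_of_ne_zero fun h0 => by simp [he0 i h0] at hi1
    have hkk : ∀ k, k ≠ i → x k = y k := fun k hk => by
      have h := hpt k; rwa [hi0 k hk, hf k, add_zero, add_zero] at h
    have hxyi : x i + 1 = y i := by
      have h := hpt i; rwa [hi1, hf i, add_zero] at h
    have key := single_diff g i hsum hkk
    have hgi : g i = 0 := by
      rcases zmod2_cases (x i) with h | h <;> rcases zmod2_cases (y i) with h' | h' <;>
        rw [h, h'] at hxyi key <;>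
        first
          | exact absurd hxyi (by decide)
          | simpa [v0, v1, zero_nsmul, one_nsmul] using key
          | simpa [v0, v1, zero_nsmul, one_nsmul] using key.symm
    have hn : 0 < n := lt_of_le_of_lt (Nat.zero_le _) i.isLt
    have hi0' := hbij.1 (hgi.trans (hg0 hn).symm)
    rw [hi0'] at hipos
    simp at hipos
  -- Case 4: e = δ_i, f = δ_j
  · by_cases hij : i = j
    · subst hij
      exact hxy (funext fun k => by
        by_cases hk : k = i
        · subst hk
          have h := hpt k; rw [hi1, hj1] at h; exact add_right_cancel h
        · have h := hpt k; rwa [hi0 k hk, hj0 k hk, add_zero, add_zero] at h)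
    · have hipos : 0 < (i : ℕ) := Nat.pos_of_ne_zero fun h0 => by simp [he0 i h0] at hi1
      have hjpos : 0 < (j : ℕ) := Nat.pos_of_ne_zero fun h0 => by simp [hf0 j h0] at hj1
      have hkk : ∀ k, k ≠ i → k ≠ j → x k = y k := fun k hki hkj => by
        have h := hpt k; rwa [hi0 k hki, hj0 k hkj, add_zero, add_zero] at h
      have hyi : x i + 1 = y i := by
        have h := hpt i; rwa [hi1, hj0 i hij, add_zero] at h
      have hyj : x j = y j + 1 := by
        have h := hpt j; rwa [hi0 j (Ne.symm hij), hj1, add_zero] at h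
      have key := double_diff g i j hij hsum hkk
      have hegi := heg i hipos (by rw [hi1]; decide)
      have hfgj := hfg j hjpos (by rw [hj1]; decide)
      rcases zmod2_cases (x i) with hxi | hxi <;> rcases zmod2_cases (x j) with hxj | hxj
      · -- x i = 0, x j = 0 : y i = 1, y j = 1
        have hyi' : y i = 1 := by rw [← hyi, hxi]; decide
        have hyj' : y j = 1 := by
          rcases zmod2_cases (y j) with h | h
          · rw [hxj, h] at hyj; exact absurd hyj (by decide)
          · exact h
        rw [hxi, hxj, hyi', hyj'] at key
        simp only [v0, v1, zero_nsmul, one_nsmul, zero_add, add_zero] at key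
        have hgj : g j = -(g i) := eq_neg_of_add_eq_zero_right key.symm
        exact (neg_case hbij hadj hij hipos hgj (hxi.trans hxj.symm)
          (hyi'.trans hyj'.symm) hegi hfgj).elim
      · -- x i = 0, x j = 1 : y i = 1, y j = 0 ⇒ g j = g i
        have hyi' : y i = 1 := by rw [← hyi, hxi]; decide
        have hyj' : y j = 0 := by
          rcases zmod2_cases (y j) with h | h
          · exact h
          · rw [hxj, h] at hyj; exact absurd hyj (by decide)
        rw [hxi, hxj, hyi', hyj'] at key
        simp only [v0, v1, zero_nsmul, one_nsmul, zero_add, add_zero] at key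
        exact absurd (hbij.1 key) (Ne.symm hij)
      · -- x i = 1, x j = 0 : y i = 0, y j = 1 ⇒ g i = g j
        have hyi' : y i = 0 := by rw [← hyi, hxi]; decide
        have hyj' : y j = 1 := by
          rcases zmod2_cases (y j) with h | h
          · rw [hxj, h] at hyj; exact absurd hyj (by decide)
          · exact h
        rw [hxi, hxj, hyi', hyj'] at key
        simp only [v0, v1, zero_nsmul, one_nsmul, zero_add, add_zero] at key
        exact absurd (hbij.1 key) hij
      · -- x i = 1, x j = 1 : y i = 0, y j = 0
        have hyi' : y i = 0 := by rw [← hyi, hxi]; decide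
        have hyj' : y j = 0 := by
          rcases zmod2_cases (y j) with h | h
          · exact h
          · rw [hxj, h] at hyj; exact absurd hyj (by decide)
        rw [hxi, hxj, hyi', hyj'] at key
        simp only [v0, v1, zero_nsmul, one_nsmul, zero_add, add_zero] at key
        have hgj : g j = -(g i) := eq_neg_of_add_eq_zero_right key
        exact (neg_case hbij hadj hij hipos hgj (hxi.trans hxj.symm)
          (hyi'.trans hyj'.symm) hegi hfgj).elim
end
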